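/- arXiv:1011.3956 — 2 statements merged into one kernel-verified Lean document; each statement's English description precedes it below -/
import Mathlib

section
/- There is a constant C > 0 such that for all τ ∈ ℝ, all ξ ∈ ℝ with ξ ≠ 0, all integers k₁, k₂ ≥ 0, and every K > 0, the two-dimensional Lebesgue measure of the set E_K = {(τ₁,ξ₁) ∈ ℝ² : |τ₁ − ξ₁⁵| ≤ 2^{k₁}, |(τ−τ₁) − (ξ−ξ₁)⁵| ≤ 2^{k₂}, |2ξ₁ − ξ| ≥ K} is at most C K^{−3} 2^{k₁+k₂} |ξ|^{−1}; moreover the measure of the set E₀ = {(τ₁,ξ₁) ∈ ℝ² : |τ₁ − ξ₁⁵| ≤ 2^{k₁}, |(τ−τ₁) − (ξ−ξ₁)⁵| ≤ 2^{k₂}} is at most C 2^{k₁+k₂} |ξ|^{−3/2}. -/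
open MeasureTheory Set ENNReal

/-!
Put `u = 2ξ₁ - ξ`. The two conditions force `|ξ₁⁵ + (ξ - ξ₁)⁵ - τ| ≤ 2^k₁ + 2^k₂`, and by the
resonance identity `ξ₁⁵ + (ξ - ξ₁)⁵ = ξ⁵/16 + (5/16) ξ u² (u² + 2ξ²)`. On each half-line `±u ≥ K`
this function of `ξ₁` stretches distances by at least `(5/2) |ξ| K (K² + ξ²)`, so the admissible
`ξ₁` have measure `≲ 2^max(k₁,k₂) / (|ξ| K (K² + ξ²))`, while for fixed `ξ₁` the admissible `τ₁`
lie in an interval of length `2 · 2^min(k₁,k₂)`; Fubini gives the first bound. For the second,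
take `K = |ξ|^(-3/2)`, which makes `|ξ| K ξ² = 1/K`, and bound the strip `|u| < K` trivially.
-/

lemma Real.volume_le_of_mul_abs_sub_le {S : Set ℝ} {f : ℝ → ℝ} {c L M : ℝ} (hM : 0 < M)
    (hf : ∀ x ∈ S, ∀ y ∈ S, M * |x - y| ≤ |f x - f y|) (hS : ∀ x ∈ S, |f x - c| ≤ L) :
    volume S ≤ ENNReal.ofReal (2 * L / M) := by
  refine (Real.volume_le_diam S).trans (Metric.ediam_le_of_forall_dist_le fun x hx y hy => ?_)
  rw [Real.dist_eq, le_div_iff₀ hM]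
  calc |x - y| * M ≤ |f x - f y| := by linarith [hf x hx y hy]
    _ = |(f x - c) - (f y - c)| := by ring_nf
    _ ≤ |f x - c| + |f y - c| := abs_sub _ _
    _ ≤ 2 * L := by linarith [hS x hx, hS y hy]

lemma volume_tube_inter_tube_le {f g : ℝ → ℝ} (hf : Measurable f) (hg : Measurable g) (a b : ℝ)
    {B : Set ℝ} (hB : MeasurableSet B) :
    volume {p : ℝ × ℝ | |p.1 - f p.2| ≤ a ∧ |p.1 - g p.2| ≤ b ∧ p.2 ∈ B}
      ≤ ENNReal.ofReal (2 * min a b) * volume {t | t ∈ B ∧ |f t - g t| ≤ a + b} := by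
  set E := {p : ℝ × ℝ | |p.1 - f p.2| ≤ a ∧ |p.1 - g p.2| ≤ b ∧ p.2 ∈ B}
  set S := {t | t ∈ B ∧ |f t - g t| ≤ a + b}
  have hS : MeasurableSet S :=
    hB.inter (measurableSet_le (f := fun t => |f t - g t|) (by fun_prop) measurable_const)
  have hE : MeasurableSet E :=
    (measurableSet_le (f := fun p : ℝ × ℝ => |p.1 - f p.2|) (by fun_prop) measurable_const).inter
      ((measurableSet_le (f := fun p : ℝ × ℝ => |p.1 - g p.2|) (by fun_prop)
        measurable_const).inter (measurable_snd hB))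
  rw [Measure.volume_eq_prod, Measure.prod_apply_symm hE, ← lintegral_indicator_const hS]
  refine lintegral_mono fun y => ?_
  by_cases hy : y ∈ S
  · rw [indicator_of_mem hy]
    have fiber_f : (fun x => (x, y)) ⁻¹' E ⊆ Icc (f y - a) (f y + a) := fun x hx =>
      ⟨by linarith [(abs_le.mp hx.1).1], by linarith [(abs_le.mp hx.1).2]⟩
    have fiber_g : (fun x => (x, y)) ⁻¹' E ⊆ Icc (g y - b) (g y + b) := fun x hx =>
      ⟨by linarith [(abs_le.mp hx.2.1).1], by linarith [(abs_le.mp hx.2.1).2]⟩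
    rcases le_total a b with hab | hab
    · rw [min_eq_left hab]
      refine (measure_mono fiber_f).trans_eq ?_
      rw [Real.volume_Icc]; ring_nf
    · rw [min_eq_right hab]
      refine (measure_mono fiber_g).trans_eq ?_
      rw [Real.volume_Icc]; ring_nf
  · have fiber_empty : (fun x => (x, y)) ⁻¹' E = ∅ := eq_empty_of_forall_notMem fun x hx =>
      hy ⟨hx.2.2, calc |f y - g y| = |(x - g y) - (x - f y)| := by ring_nf
        _ ≤ |x - g y| + |x - f y| := abs_sub _ _
        _ ≤ a + b := by linarith [hx.1, hx.2.1]⟩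
    simp [fiber_empty]

lemma min_mul_add_le {a b : ℝ} (ha : 0 ≤ a) (hb : 0 ≤ b) : min a b * (a + b) ≤ 2 * a * b := by
  rcases le_total a b with h | h
  · rw [min_eq_left h]; nlinarith
  · rw [min_eq_right h]; nlinarith

lemma fifth_pow_add_fifth_pow_sub_sub (ξ t s : ℝ) :
    (t ^ 5 + (ξ - t) ^ 5) - (s ^ 5 + (ξ - s) ^ 5) =
      5 / 16 * ξ * ((2 * t - ξ) - (2 * s - ξ)) * ((2 * t - ξ) + (2 * s - ξ)) *
        ((2 * t - ξ) ^ 2 + (2 * s - ξ) ^ 2 + 2 * ξ ^ 2) := by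
  ring

lemma mul_abs_sub_le_abs_fifth_pow_add_fifth_pow_sub {ξ K t s : ℝ} (hK : 0 ≤ K)
    (ht : K ≤ |2 * t - ξ|) (hs : K ≤ |2 * s - ξ|) (hts : 0 ≤ (2 * t - ξ) * (2 * s - ξ)) :
    5 / 2 * |ξ| * K * (K ^ 2 + ξ ^ 2) * |t - s| ≤
      |(t ^ 5 + (ξ - t) ^ 5) - (s ^ 5 + (ξ - s) ^ 5)| := by
  have hsum : 2 * K ≤ |(2 * t - ξ) + (2 * s - ξ)| := by
    have hsq : (2 * K) ^ 2 ≤ ((2 * t - ξ) + (2 * s - ξ)) ^ 2 := by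
      nlinarith [sq_abs (2 * t - ξ), sq_abs (2 * s - ξ), abs_mul (2 * t - ξ) (2 * s - ξ),
        abs_of_nonneg hts, mul_le_mul ht hs hK (hK.trans ht)]
    simpa [abs_of_nonneg hK] using sq_le_sq.mp hsq
  have hsq : 2 * (K ^ 2 + ξ ^ 2) ≤ (2 * t - ξ) ^ 2 + (2 * s - ξ) ^ 2 + 2 * ξ ^ 2 := by
    nlinarith [sq_abs (2 * t - ξ), sq_abs (2 * s - ξ), mul_self_le_mul_self hK ht,
      mul_self_le_mul_self hK hs]
  have hdiff : |(2 * t - ξ) - (2 * s - ξ)| = 2 * |t - s| := by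
    rw [show (2 * t - ξ) - (2 * s - ξ) = 2 * (t - s) by ring, abs_mul, abs_two]
  rw [fifth_pow_add_fifth_pow_sub_sub, abs_mul, abs_mul, abs_mul, abs_mul, hdiff,
    abs_of_nonneg (by positivity : (0:ℝ) ≤ (2 * t - ξ) ^ 2 + (2 * s - ξ) ^ 2 + 2 * ξ ^ 2)]
  calc 5 / 2 * |ξ| * K * (K ^ 2 + ξ ^ 2) * |t - s|
      = |5 / 16| * |ξ| * (2 * |t - s|) * (2 * K) * (2 * (K ^ 2 + ξ ^ 2)) := by
        rw [abs_of_pos (by norm_num : (0:ℝ) < 5 / 16)]; ring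
    _ ≤ _ := by gcongr

lemma volume_fifth_pow_add_fifth_pow_sublevel_le {ξ K : ℝ} (hξ : ξ ≠ 0) (hK : 0 < K) (τ : ℝ)
    {L : ℝ} (hL : 0 ≤ L) :
    volume {t | K ≤ |2 * t - ξ| ∧ |t ^ 5 + (ξ - t) ^ 5 - τ| ≤ L}
      ≤ ENNReal.ofReal (8 * L / (5 * |ξ| * K * (K ^ 2 + ξ ^ 2))) := by
  set M := 5 / 2 * |ξ| * K * (K ^ 2 + ξ ^ 2)
  have hM : 0 < M := by have := abs_pos.mpr hξ; positivity
  have on_half_line (H : Set ℝ) (hH : ∀ t ∈ H, K ≤ |2 * t - ξ|)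
      (hsign : ∀ t ∈ H, ∀ s ∈ H, 0 ≤ (2 * t - ξ) * (2 * s - ξ)) :
      volume {t | t ∈ H ∧ |t ^ 5 + (ξ - t) ^ 5 - τ| ≤ L} ≤ ENNReal.ofReal (2 * L / M) :=
    Real.volume_le_of_mul_abs_sub_le hM (fun t ht s hs =>
      mul_abs_sub_le_abs_fifth_pow_add_fifth_pow_sub hK.le (hH t ht.1) (hH s hs.1)
        (hsign t ht.1 s hs.1)) fun t ht => ht.2
  have hcover : {t | K ≤ |2 * t - ξ| ∧ |t ^ 5 + (ξ - t) ^ 5 - τ| ≤ L} ⊆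
      {t | t ∈ {t | K ≤ 2 * t - ξ} ∧ |t ^ 5 + (ξ - t) ^ 5 - τ| ≤ L} ∪
        {t | t ∈ {t | 2 * t - ξ ≤ -K} ∧ |t ^ 5 + (ξ - t) ^ 5 - τ| ≤ L} := fun t ht =>
    (le_abs'.mp (show K ≤ |2 * t - ξ| from ht.1)).symm.imp (fun h => ⟨h, ht.2⟩) fun h => ⟨h, ht.2⟩
  calc _ ≤ _ := measure_mono hcover
    _ ≤ ENNReal.ofReal (2 * L / M) + ENNReal.ofReal (2 * L / M) := by
      refine (measure_union_le _ _).trans (add_le_add (on_half_line _ ?_ ?_) (on_half_line _ ?_ ?_))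
      · exact fun t ht => ht.trans (le_abs_self _)
      · exact fun t ht s hs => mul_nonneg (hK.le.trans ht) (hK.le.trans hs)
      · exact fun t ht => le_abs'.mpr (Or.inl ht)
      · exact fun t ht s hs =>
          mul_nonneg_of_nonpos_of_nonpos (by linarith [ht.out]) (by linarith [hs.out])
    _ = _ := by
      rw [← ENNReal.ofReal_add (by positivity) (by positivity)]
      congr 1
      field_simp
      ring

lemma volume_fifth_pow_tubes_le_mul (τ ξ a b : ℝ) {B : Set ℝ} (hB : MeasurableSet B) :
    volume {p : ℝ × ℝ | |p.1 - p.2 ^ 5| ≤ a ∧ |(τ - p.1) - (ξ - p.2) ^ 5| ≤ b ∧ p.2 ∈ B}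
      ≤ ENNReal.ofReal (2 * min a b) *
        volume {t | t ∈ B ∧ |t ^ 5 + (ξ - t) ^ 5 - τ| ≤ a + b} := by
  convert volume_tube_inter_tube_le (f := (· ^ 5)) (g := fun t => τ - (ξ - t) ^ 5)
    (by fun_prop) (by fun_prop) a b hB using 5
  · rename_i p
    rw [show τ - p.1 - (ξ - p.2) ^ 5 = -(p.1 - (τ - (ξ - p.2) ^ 5)) by ring, abs_neg]
  · rename_i t
    rw [show t ^ 5 + (ξ - t) ^ 5 - τ = t ^ 5 - (τ - (ξ - t) ^ 5) by ring]

lemma volume_fifth_pow_tubes_far_le {ξ K : ℝ} (hξ : ξ ≠ 0) (hK : 0 < K) (τ : ℝ) {a b : ℝ}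
    (ha : 0 ≤ a) (hb : 0 ≤ b) :
    volume {p : ℝ × ℝ | |p.1 - p.2 ^ 5| ≤ a ∧ |(τ - p.1) - (ξ - p.2) ^ 5| ≤ b ∧
        K ≤ |2 * p.2 - ξ|}
      ≤ ENNReal.ofReal (32 * a * b / (5 * |ξ| * K * (K ^ 2 + ξ ^ 2))) := by
  have hD : 0 < 5 * |ξ| * K * (K ^ 2 + ξ ^ 2) := by have := abs_pos.mpr hξ; positivity
  calc _ ≤ ENNReal.ofReal (2 * min a b) *
        ENNReal.ofReal (8 * (a + b) / (5 * |ξ| * K * (K ^ 2 + ξ ^ 2))) :=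
      (volume_fifth_pow_tubes_le_mul τ ξ a b (B := {t | K ≤ |2 * t - ξ|})
        (measurableSet_le measurable_const (by fun_prop))).trans
        (mul_le_mul_right (volume_fifth_pow_add_fifth_pow_sublevel_le hξ hK τ (by positivity)) _)
    _ = ENNReal.ofReal (2 * min a b * (8 * (a + b) / (5 * |ξ| * K * (K ^ 2 + ξ ^ 2)))) :=
      (ENNReal.ofReal_mul (by positivity)).symm
    _ ≤ _ := by
      refine ENNReal.ofReal_le_ofReal ?_
      rw [← mul_div_assoc]
      exact div_le_div_of_nonneg_right (by nlinarith [min_mul_add_le ha hb]) hD.le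

lemma volume_fifth_pow_tubes_near_le (τ ξ K : ℝ) {a b : ℝ} (ha : 0 ≤ a) (hb : 0 ≤ b) :
    volume {p : ℝ × ℝ | |p.1 - p.2 ^ 5| ≤ a ∧ |(τ - p.1) - (ξ - p.2) ^ 5| ≤ b ∧
        |2 * p.2 - ξ| < K}
      ≤ ENNReal.ofReal (2 * min a b * K) := by
  have hstrip : volume {t : ℝ | |2 * t - ξ| < K} ≤ ENNReal.ofReal K := by
    calc _ ≤ volume (Ioo ((ξ - K) / 2) ((ξ + K) / 2)) := measure_mono fun t ht => by
          have := abs_lt.mp (show |2 * t - ξ| < K from ht)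
          constructor <;> linarith
      _ = _ := by rw [Real.volume_Ioo]; ring_nf
  calc _ ≤ ENNReal.ofReal (2 * min a b) * ENNReal.ofReal K :=
      (volume_fifth_pow_tubes_le_mul τ ξ a b (B := {t | |2 * t - ξ| < K})
        (measurableSet_lt (by fun_prop) measurable_const)).trans
        (mul_le_mul_right ((measure_mono fun t ht => ht.1).trans hstrip) _)
    _ = _ := (ENNReal.ofReal_mul (by positivity)).symm

lemma volume_fifth_pow_tubes_le {ξ : ℝ} (hξ : ξ ≠ 0) (τ : ℝ) {a b : ℝ} (ha : 1 ≤ a) (hb : 1 ≤ b) :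
    volume {p : ℝ × ℝ | |p.1 - p.2 ^ 5| ≤ a ∧ |(τ - p.1) - (ξ - p.2) ^ 5| ≤ b}
      ≤ ENNReal.ofReal (9 * (a * b) * |ξ| ^ (-(3:ℝ) / 2)) := by
  have hξ' : 0 < |ξ| := abs_pos.mpr hξ
  set K₀ := |ξ| ^ (-(3:ℝ) / 2)
  have hK₀ : 0 < K₀ := by positivity
  have hK₀ξ : K₀ ^ 2 * |ξ| ^ 3 = 1 := by
    rw [← Real.rpow_natCast, ← Real.rpow_natCast |ξ| 3, ← Real.rpow_mul hξ'.le,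
      ← Real.rpow_add hξ']
    norm_num
  have hfar : 32 * a * b / (5 * |ξ| * K₀ * (K₀ ^ 2 + ξ ^ 2)) ≤ 32 / 5 * (a * b) * K₀ := by
    rw [div_le_iff₀ (by positivity), ← sq_abs ξ]
    nlinarith [mul_pos (by positivity : 0 < a * b) (pow_pos hK₀ 4),
      mul_pos (by positivity : 0 < a * b) hξ']
  have hnear : min a b ≤ a * b :=
    (min_le_left _ _).trans (le_mul_of_one_le_right (by positivity) hb)
  calc _ ≤ volume {p : ℝ × ℝ | |p.1 - p.2 ^ 5| ≤ a ∧
          |(τ - p.1) - (ξ - p.2) ^ 5| ≤ b ∧ K₀ ≤ |2 * p.2 - ξ|} +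
        volume {p : ℝ × ℝ | |p.1 - p.2 ^ 5| ≤ a ∧
          |(τ - p.1) - (ξ - p.2) ^ 5| ≤ b ∧ |2 * p.2 - ξ| < K₀} :=
        (measure_mono fun p hp => (le_or_gt K₀ |2 * p.2 - ξ|).imp
          (fun h => ⟨hp.1, hp.2, h⟩) fun h => ⟨hp.1, hp.2, h⟩).trans (measure_union_le _ _)
    _ ≤ _ := add_le_add (volume_fifth_pow_tubes_far_le hξ hK₀ τ (by positivity) (by positivity))
        (volume_fifth_pow_tubes_near_le τ ξ K₀ (by positivity) (by positivity))
    _ ≤ _ := by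
      rw [← ENNReal.ofReal_add (by positivity) (by positivity)]
      refine ENNReal.ofReal_le_ofReal ?_
      nlinarith [mul_le_mul_of_nonneg_right hnear hK₀.le, mul_pos (by positivity : 0 < a * b) hK₀]

theorem stmt2 :
    ∃ C : ℝ, 0 < C ∧ ∀ (τ ξ : ℝ), ξ ≠ 0 → ∀ (k₁ k₂ : ℕ) (K : ℝ), 0 < K →
      volume {p : ℝ × ℝ | |p.1 - p.2 ^ 5| ≤ (2:ℝ) ^ k₁ ∧
          |(τ - p.1) - (ξ - p.2) ^ 5| ≤ (2:ℝ) ^ k₂ ∧ K ≤ |2 * p.2 - ξ|}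
        ≤ ENNReal.ofReal (C * K ^ (-(3:ℝ)) * 2 ^ (k₁ + k₂) * |ξ|⁻¹) ∧
      volume {p : ℝ × ℝ | |p.1 - p.2 ^ 5| ≤ (2:ℝ) ^ k₁ ∧
          |(τ - p.1) - (ξ - p.2) ^ 5| ≤ (2:ℝ) ^ k₂}
        ≤ ENNReal.ofReal (C * 2 ^ (k₁ + k₂) * |ξ| ^ (-(3:ℝ)/2)) := by
  refine ⟨9, by norm_num, fun τ ξ hξ k₁ k₂ K hK => ⟨?_, ?_⟩⟩
  · refine (volume_fifth_pow_tubes_far_le hξ hK τ (by positivity) (by positivity)).trans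
      (ENNReal.ofReal_le_ofReal ?_)
    have hξ' : 0 < |ξ| := abs_pos.mpr hξ
    rw [Real.rpow_neg hK.le, Real.rpow_ofNat, pow_add, div_le_iff₀ (by positivity)]
    field_simp
    nlinarith [mul_pos (mul_pos (by positivity : (0:ℝ) < 2 ^ k₁ * 2 ^ k₂) hξ') (pow_pos hK 3)]
  · rw [pow_add]
    exact volume_fifth_pow_tubes_le hξ τ (one_le_pow₀ one_le_two) (one_le_pow₀ one_le_two)
end

section
/- Let s, a ∈ ℝ with s ≥ a. For φ : ℝ → ℂ with ‖φ‖_{H^{s,a}} < ∞ and λ ≥ 1, define φ_λ(x) = λ^{−2} φ(λ^{−1}x). Then ‖φ_λ‖_{H^{s,a}} ≤ λ^{−3/2−a} ‖φ‖_{H^{s,a}}. -/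
open MeasureTheory ENNReal

noncomputable section

/-- Japanese bracket `⟨ξ⟩ = (1 + ξ²)^(1/2)`. -/
def jb (x : ℝ) : ℝ := Real.sqrt (1 + x ^ 2)

/-- the weighted Sobolev norm `H^{s,a}`. -/
def Hnorm (s a : ℝ) (φ : ℝ → ℂ) : ℝ≥0∞ :=
  eLpNorm (fun ξ => ((jb ξ ^ (s - a) * |ξ| ^ a : ℝ) : ℂ) * VectorFourier.fourierIntegral Real.fourierChar volume (innerₗ ℝ) φ ξ) 2 volume

/-! Dilation acts on the Fourier side by `𝓕 φ_λ (ξ) = λ⁻¹ 𝓕 φ (λ ξ)`. Since `⟨ξ⟩ ≤ ⟨λ ξ⟩` and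
`s - a ≥ 0`, the weight `w(ξ) = ⟨ξ⟩^(s-a) |ξ|^a` satisfies `w ξ ≤ λ^(-a) w (λ ξ)`, and the change
of variables `η = λ ξ` in the `L²` norm contributes the remaining factor `λ^(-1/2)`. -/

open FourierTransform

theorem eLpNorm_comp_mul_left {E : Type*} [NormedAddCommGroup E] (g : ℝ → E) {c : ℝ}
    (hc : c ≠ 0) (p : ℝ≥0∞) :
    eLpNorm (fun x => g (c * x)) p volume
      = ENNReal.ofReal |c⁻¹| ^ (1 / p).toReal * eLpNorm g p volume := by
  rw [← smul_eq_mul, ← eLpNorm_smul_measure_of_ne_zero (by simpa using hc),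
    ← Real.map_volume_mul_left hc, (measurableEmbedding_mulLeft₀ hc).eLpNorm_map_measure]
  rfl

theorem Real.fourier_comp_mul_left {E : Type*} [NormedAddCommGroup E] [NormedSpace ℂ E]
    (f : ℝ → E) {c : ℝ} (hc : c ≠ 0) (ξ : ℝ) :
    𝓕 (fun x => f (c * x)) ξ = |c⁻¹| • 𝓕 f (c⁻¹ * ξ) := by
  simp only [Real.fourier_eq]
  rw [← Measure.integral_comp_mul_left _ c]
  congr 1 with x
  simp only [RCLike.inner_apply, conj_trivial]
  field_simp

theorem norm_fourier_dilate {l : ℝ} (hl : 0 < l) (φ : ℝ → ℂ) (ξ : ℝ) :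
    ‖𝓕 (fun x => l ^ (-2 : ℤ) * φ (l⁻¹ * x)) ξ‖ = l⁻¹ * ‖𝓕 φ (l * ξ)‖ := by
  have hsmul : 𝓕 (fun x => (l : ℂ) ^ (-2 : ℤ) * φ (l⁻¹ * x))
      = (l : ℂ) ^ (-2 : ℤ) • 𝓕 (fun x => φ (l⁻¹ * x)) :=
    VectorFourier.fourierIntegral_const_smul _ _ _ (fun x => φ (l⁻¹ * x)) _
  rw [hsmul, Pi.smul_apply, Real.fourier_comp_mul_left φ (inv_ne_zero hl.ne'), inv_inv,
    norm_smul, norm_smul, norm_zpow, Complex.norm_real, Real.norm_eq_abs, Real.norm_eq_abs,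
    abs_abs, abs_of_pos hl]
  field_simp

theorem jb_le_jb {x y : ℝ} (h : |x| ≤ |y|) : jb x ≤ jb y :=
  Real.sqrt_le_sqrt (add_le_add_right (sq_le_sq.mpr h) 1)

def sobolevWeight (s a ξ : ℝ) : ℝ := jb ξ ^ (s - a) * |ξ| ^ a

theorem sobolevWeight_nonneg (s a ξ : ℝ) : 0 ≤ sobolevWeight s a ξ := by
  unfold sobolevWeight jb
  positivity

theorem sobolevWeight_le_dilate {s a l : ℝ} (hsa : a ≤ s) (hl : 1 ≤ l) (ξ : ℝ) :
    sobolevWeight s a ξ ≤ l ^ (-a) * sobolevWeight s a (l * ξ) := by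
  have hl0 : 0 < l := one_pos.trans_le hl
  have hjb : jb ξ ≤ jb (l * ξ) := by
    apply jb_le_jb
    rw [abs_mul, abs_of_pos hl0]
    exact le_mul_of_one_le_left (abs_nonneg ξ) hl
  have hrescale : l ^ (-a) * |l * ξ| ^ a = |ξ| ^ a := by
    rw [abs_mul, abs_of_pos hl0, Real.mul_rpow hl0.le (abs_nonneg ξ), ← mul_assoc,
      ← Real.rpow_add hl0, neg_add_cancel, Real.rpow_zero, one_mul]
  calc sobolevWeight s a ξ ≤ jb (l * ξ) ^ (s - a) * |ξ| ^ a := by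
        unfold sobolevWeight
        gcongr
        exact Real.sqrt_nonneg _
    _ = l ^ (-a) * sobolevWeight s a (l * ξ) := by
        rw [sobolevWeight, ← hrescale]
        ring

theorem norm_sobolevWeight_mul_fourier_dilate_le {s a l : ℝ} (hsa : a ≤ s) (hl : 1 ≤ l)
    (φ : ℝ → ℂ) (ξ : ℝ) :
    ‖(sobolevWeight s a ξ : ℂ) * 𝓕 (fun x => l ^ (-2 : ℤ) * φ (l⁻¹ * x)) ξ‖
      ≤ ‖l ^ (-1 - a) • ((sobolevWeight s a (l * ξ) : ℂ) * 𝓕 φ (l * ξ))‖ := by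
  have hl0 : 0 < l := one_pos.trans_le hl
  rw [norm_mul, norm_fourier_dilate hl0, norm_smul, norm_mul, Complex.norm_real,
    Complex.norm_real, Real.norm_of_nonneg (sobolevWeight_nonneg _ _ _),
    Real.norm_of_nonneg (sobolevWeight_nonneg _ _ _), Real.norm_of_nonneg (by positivity),
    sub_eq_add_neg, Real.rpow_add hl0, Real.rpow_neg_one]
  calc sobolevWeight s a ξ * (l⁻¹ * ‖𝓕 φ (l * ξ)‖)
      ≤ l ^ (-a) * sobolevWeight s a (l * ξ) * (l⁻¹ * ‖𝓕 φ (l * ξ)‖) := by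
        gcongr
        exact sobolevWeight_le_dilate hsa hl ξ
    _ = l⁻¹ * l ^ (-a) * (sobolevWeight s a (l * ξ) * ‖𝓕 φ (l * ξ)‖) := by ring

theorem stmt16_general (s a : ℝ) (hsa : a ≤ s) (φ : ℝ → ℂ)
    (l : ℝ) (hl : 1 ≤ l) :
    Hnorm s a (fun x => l ^ (-2 : ℤ) * φ (l⁻¹ * x))
      ≤ ENNReal.ofReal (l ^ (-3/2 - a)) * Hnorm s a φ := by
  have hl0 : 0 < l := one_pos.trans_le hl
  set G : ℝ → ℂ := fun ξ => (sobolevWeight s a ξ : ℂ) * 𝓕 φ ξ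
  have hexponent : ENNReal.ofReal (l ^ (-1 - a)) * ENNReal.ofReal |l⁻¹| ^ (1 / 2 : ℝ≥0∞).toReal
      = ENNReal.ofReal (l ^ (-3/2 - a)) := by
    rw [abs_of_pos (inv_pos.mpr hl0), ENNReal.ofReal_rpow_of_nonneg (by positivity) (by norm_num),
      ← ENNReal.ofReal_mul (by positivity), Real.inv_rpow hl0.le, ← Real.rpow_neg hl0.le,
      ← Real.rpow_add hl0]
    congr 2
    norm_num
    ring
  calc Hnorm s a (fun x => l ^ (-2 : ℤ) * φ (l⁻¹ * x))
      ≤ eLpNorm (l ^ (-1 - a) • fun ξ => G (l * ξ)) 2 volume :=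
        eLpNorm_mono (norm_sobolevWeight_mul_fourier_dilate_le hsa hl φ)
    _ = ENNReal.ofReal (l ^ (-3/2 - a)) * Hnorm s a φ := by
        rw [eLpNorm_const_smul, eLpNorm_comp_mul_left G hl0.ne', ← mul_assoc,
          Real.enorm_eq_ofReal (by positivity), hexponent]
        rfl

theorem stmt16 (s a : ℝ) (hsa : a ≤ s) (φ : ℝ → ℂ) (hφ : Hnorm s a φ ≠ ∞)
    (l : ℝ) (hl : 1 ≤ l) :
    Hnorm s a (fun x => l ^ (-2 : ℤ) * φ (l⁻¹ * x))
      ≤ ENNReal.ofReal (l ^ (-3/2 - a)) * Hnorm s a φ :=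
  stmt16_general s a hsa φ l hl
end
end
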